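/- arXiv:math/0602586 — 3 statements merged into one kernel-verified Lean document; each statement's English description precedes it below -/
import Mathlib

section
/- Let k be a field of characteristic ℓ ≠ 2, G a finite group, ρ : G → GL₂(k) absolutely irreducible, χ : G → k^× a character of even order such that for all g with χ(g) ≠ 1 the eigenvalues of ρ(g) are {α, χ(g)α}. Let Z = {g ∈ G : ρ(g) is scalar} and H = ker χ. Then H/Z is an abelian group. -/
open Matrix Polynomial

/-!
Since `χ` has even order, some `g₀` has `χ g₀ = -1`, and then `χ (g₀ h) = -1` for every `h ∈ H`.
An element with eigenvalues `{α, -α}` squares to the scalar `α²` by Cayley–Hamilton, so in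
`PGL₂(k)` the image `s` of `g₀` satisfies `s² = 1` and `(s h)² = 1`, i.e. conjugation by `s`
inverts every element of the image of `H`. A group on which inversion is a homomorphism is
abelian.
-/

/-- `ρ` is absolutely irreducible: the matrices in the image of `ρ` span the full
matrix algebra `M₂(k)` (Burnside's criterion). -/
def AbsIrred {k G : Type*} [Field k] [Group G]
    (ρ : G →* GL (Fin 2) k) : Prop :=
  Submodule.span k {m : Matrix (Fin 2) (Fin 2) k | ∃ g : G, m = (ρ g).val} = ⊤

theorem Matrix.sq_eq_smul_one_of_charpoly_eq {n R : Type*} [Fintype n] [DecidableEq n]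
    [CommRing R]
    (M : Matrix n n R) (α : R) (h : M.charpoly = (X - C α) * (X - C (-α))) :
    M ^ 2 = α ^ 2 • (1 : Matrix n n R) := by
  have hfactor : (X - C α) * (X - C (-α)) = (X ^ 2 - C (α ^ 2) : R[X]) := by
    rw [C_neg, C_pow]; ring
  have hCH := M.aeval_self_charpoly
  rwa [h, hfactor, map_sub, aeval_X_pow, aeval_C, Algebra.algebraMap_eq_smul_one,
    sub_eq_zero] at hCH

theorem Matrix.GeneralLinearGroup.sq_mem_center_of_charpoly_eq {n R : Type*} [Fintype n]
    [DecidableEq n] [CommRing R] (u : GL n R) (α : R)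
    (h : u.val.charpoly = (X - C α) * (X - C (-α))) :
    u ^ 2 ∈ Subgroup.center (GL n R) := by
  rw [mem_center_iff_val_mem_range_scalar, Units.val_pow_eq_pow_val,
    sq_eq_smul_one_of_charpoly_eq _ α h]
  exact ⟨α ^ 2, by simp [smul_one_eq_diagonal]⟩

theorem Units.val_eq_neg_one_of_sq_eq_one {R : Type*} [Ring R] [NoZeroDivisors R] {ζ : Rˣ}
    (h1 : ζ ≠ 1) (h2 : ζ ^ 2 = 1) : (ζ : R) = -1 := by
  have : (ζ : R) ^ 2 = 1 := by rw [← Units.val_pow_eq_pow_val, h2, Units.val_one]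
  exact (sq_eq_one_iff.mp this).resolve_left fun h => h1 (Units.ext h)

theorem MonoidHom.exists_apply_ne_one_and_sq_eq_one {G A : Type*} [Group G] [CommGroup A]
    (χ : G →* A) (heven : Even (orderOf χ)) (hpos : 0 < orderOf χ) :
    ∃ g, χ g ≠ 1 ∧ χ g ^ 2 = 1 := by
  obtain ⟨m, hm⟩ := heven
  have hpow : χ ^ m ≠ 1 := pow_ne_one_of_lt_orderOf (by omega) (by omega)
  obtain ⟨g, hg⟩ := DFunLike.ne_iff.mp hpow
  refine ⟨g ^ m, by simpa using hg, ?_⟩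
  rw [map_pow, ← pow_mul, mul_two, ← hm, ← MonoidHom.pow_apply, pow_orderOf_eq_one,
    MonoidHom.one_apply]

theorem commute_of_sq_eq_one_of_sq_mul_eq_one {Q : Type*} [Group Q] {s a b : Q}
    (hs : s ^ 2 = 1) (ha : (s * a) ^ 2 = 1) (hb : (s * b) ^ 2 = 1)
    (hab : (s * (a * b)) ^ 2 = 1) : Commute a b := by
  have conj_eq_inv : ∀ x : Q, (s * x) ^ 2 = 1 → s * x * s = x⁻¹ := fun x hx =>
    eq_inv_of_mul_eq_one_left (by rw [← hx, sq, mul_assoc])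
  have hs' : s * s = 1 := by rw [← sq, hs]
  refine Commute.inv_inv_iff.mp ?_
  calc a⁻¹ * b⁻¹ = s * a * s * (s * b * s) := by rw [conj_eq_inv a ha, conj_eq_inv b hb]
    _ = s * a * (s * s) * b * s := by group
    _ = s * (a * b) * s := by rw [hs', mul_one, mul_assoc s a b]
    _ = b⁻¹ * a⁻¹ := by rw [conj_eq_inv _ hab, _root_.mul_inv_rev]

theorem stmt1_general {k G : Type*} [Field k] [Group G]
    (ρ : G →* GL (Fin 2) k)
    (χ : G →* kˣ) (hχeven : Even (orderOf χ)) (hχpos : 0 < orderOf χ)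
    (heig : ∀ g : G, χ g ≠ 1 → ∃ α : k,
      ((ρ g).val).charpoly = (X - C α) * (X - C ((χ g : k) * α))) :
    ∀ h₁ ∈ χ.ker, ∀ h₂ ∈ χ.ker, ∃ c : k,
      (ρ (h₁ * h₂ * h₁⁻¹ * h₂⁻¹)).val = c • (1 : Matrix (Fin 2) (Fin 2) k) := by
  intro h₁ hh₁ h₂ hh₂
  obtain ⟨g₀, hne, hsq⟩ := χ.exists_apply_ne_one_and_sq_eq_one hχeven hχpos
  let π := (QuotientGroup.mk' (Subgroup.center (GL (Fin 2) k))).comp ρ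
  have hflip : ∀ h ∈ χ.ker, π (g₀ * h) ^ 2 = 1 := fun h hh => by
    have hχ : χ (g₀ * h) = χ g₀ := by rw [map_mul, MonoidHom.mem_ker.mp hh, mul_one]
    obtain ⟨α, hα⟩ := heig (g₀ * h) (hχ ▸ hne)
    rw [hχ, Units.val_eq_neg_one_of_sq_eq_one hne hsq, neg_one_mul] at hα
    rw [← map_pow, MonoidHom.comp_apply, QuotientGroup.mk'_apply, QuotientGroup.eq_one_iff,
      map_pow]
    exact GeneralLinearGroup.sq_mem_center_of_charpoly_eq _ α hα
  have hcomm : Commute (π h₁) (π h₂) := by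
    refine commute_of_sq_eq_one_of_sq_mul_eq_one (s := π g₀) ?_ ?_ ?_ ?_
    · simpa using hflip 1 (one_mem _)
    · simpa only [map_mul] using hflip h₁ hh₁
    · simpa only [map_mul] using hflip h₂ hh₂
    · simpa only [map_mul] using hflip _ (mul_mem hh₁ hh₂)
  have hcenter : ρ (h₁ * h₂ * h₁⁻¹ * h₂⁻¹) ∈ Subgroup.center (GL (Fin 2) k) := by
    have hπ : π (h₁ * h₂ * h₁⁻¹ * h₂⁻¹) = 1 := by
      rw [map_mul, map_mul, map_mul, map_inv, map_inv, hcomm.eq]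
      group
    exact (QuotientGroup.eq_one_iff _).mp hπ
  obtain ⟨c, hc⟩ := GeneralLinearGroup.mem_center_iff_val_mem_range_scalar.mp hcenter
  refine ⟨c, ?_⟩
  rw [← hc]
  simp [smul_one_eq_diagonal]

/-- With `k` of characteristic `ℓ ≠ 2`, `G` finite, `ρ : G → GL₂(k)`
absolutely irreducible and `χ : G → kˣ` of even order such that for all `g` with
`χ g ≠ 1` the eigenvalues of `ρ g` are `{α, χ g • α}`, let
`Z = {g : ρ g is scalar}` and `H = ker χ`.  Then `H/Z` is abelian, i.e. the image
under `ρ` of every commutator of elements of `H` is a scalar matrix. -/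
theorem stmt1 {k G : Type*} [Field k] [Group G] [Finite G]
    (ℓ : ℕ) [CharP k ℓ] (hℓ : ℓ ≠ 2)
    (ρ : G →* GL (Fin 2) k) (habs : AbsIrred ρ)
    (χ : G →* kˣ) (hχeven : Even (orderOf χ)) (hχpos : 0 < orderOf χ)
    (heig : ∀ g : G, χ g ≠ 1 → ∃ α : k,
      ((ρ g).val).charpoly = (X - C α) * (X - C ((χ g : k) * α))) :
    ∀ h₁ ∈ χ.ker, ∀ h₂ ∈ χ.ker, ∃ c : k,
      (ρ (h₁ * h₂ * h₁⁻¹ * h₂⁻¹)).val = c • (1 : Matrix (Fin 2) (Fin 2) k) :=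
  stmt1_general ρ χ hχeven hχpos heig
end

section
/- Let T be a commutative ring, and let C be the category of T-modules finitely generated over a complete DVR O. Define a module N of finite length to be of type ω if on every Jordan–Hölder constituent the relation T_v² = T_{v,v}(1+q_v)² holds for all v in the index set, and a general N ∈ C to be of type ω if all graded pieces λⁿN/λⁿ⁺¹N of its λ-adic filtration are of type ω. Then the full subcategory of type-ω modules is a Serre subcategory of C: it is closed under submodules, quotients, and extensions. -/
/-!
A module is of type ω when each `t_v = T_v² − T_{v,v}(1+q_v)²` acts topologically nilpotently
for the `λ`-adic topology, i.e. `t_v^m • N ⊆ λⁿ • N` for `m ≫ n`. This passes to quotients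
directly, and to extensions by composing the two exponents. For a submodule `N' ⊆ N`, if
`t_v^m • x = λ^(n+c) • y` with `x ∈ N'`, then `λ^(n+c) • y ∈ N'`, and since `N/N'` is
Noetherian its `λ`-power torsion is killed by a fixed `λ^c`, so `λ^c • y ∈ N'` already.
-/

/-- A `T`-module `N` (finitely generated over the DVR `O` with uniformizer `lam`)
is *of type ω* if, for every place `v`, the Hecke operator
`t_v = T_v² − T_{v,v}(1+q_v)²` acts nilpotently on every graded piece
`λⁿN/λⁿ⁺¹N` of the `λ`-adic filtration; equivalently (for finite length graded
pieces, by Jordan–Hölder) the relation `T_v² = T_{v,v}(1+q_v)²` holds on every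
Jordan–Hölder constituent.  Concretely: for all `v` and `n` there is `m` with
`t_v^m • N ⊆ λⁿ • N`. -/
def TypeOmega {O T : Type*} [CommRing O] [CommRing T] [Algebra O T]
    {V : Type*} (Tv Tvv q : V → T) (lam : O)
    (N : Type*) [AddCommGroup N] [Module T N] [Module O N] [IsScalarTower O T N] : Prop :=
  ∀ v : V, ∀ n : ℕ, ∃ m : ℕ, ∀ x : N,
    ∃ y : N, ((Tv v) ^ 2 - (Tvv v) * (1 + q v) ^ 2) ^ m • x = lam ^ n • y

theorem exists_pow_smul_eq_zero_of_pow_smul_eq_zero {R M : Type*} [CommRing R] [AddCommGroup M]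
    [Module R M] [IsNoetherian R M] (r : R) :
    ∃ c : ℕ, ∀ (x : M) (k : ℕ), r ^ k • x = 0 → r ^ c • x = 0 := by
  set φ := algebraMap R (Module.End R M) r
  obtain ⟨c, hc⟩ := φ.eventually_iSup_ker_pow_eq.exists
  refine ⟨c, fun x k hx => ?_⟩
  have hx : x ∈ ⨆ m, LinearMap.ker (φ ^ m) :=
    Submodule.mem_iSup_of_mem k (by simpa [φ, ← map_pow] using hx)
  rw [hc] at hx
  simpa [φ, ← map_pow] using hx

def IsAdicNilpotent {O T : Type*} [Monoid O] [Monoid T] (r : O) (a : T)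
    (N : Type*) [SMul O N] [SMul T N] : Prop :=
  ∀ n : ℕ, ∃ m : ℕ, ∀ x : N, ∃ y : N, a ^ m • x = r ^ n • y

section AdicNilpotent

variable {O T : Type*} [CommRing O] [CommRing T] [Algebra O T]
variable {N N' N'' : Type*}
  [AddCommGroup N] [Module T N] [Module O N] [IsScalarTower O T N]
  [AddCommGroup N'] [Module T N'] [Module O N'] [IsScalarTower O T N']
  [AddCommGroup N''] [Module T N''] [Module O N''] [IsScalarTower O T N'']
  {r : O} {a : T}

theorem IsAdicNilpotent.of_surjective (h : IsAdicNilpotent r a N) (g : N →ₗ[T] N'')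
    (hg : Function.Surjective g) : IsAdicNilpotent r a N'' := by
  intro n
  obtain ⟨m, hm⟩ := h n
  refine ⟨m, fun x'' => ?_⟩
  obtain ⟨x, rfl⟩ := hg x''
  obtain ⟨y, hy⟩ := hm x
  exact ⟨g y, by rw [← map_smul, hy, LinearMap.map_smul_of_tower]⟩

theorem IsAdicNilpotent.of_exact (h' : IsAdicNilpotent r a N') (h'' : IsAdicNilpotent r a N'')
    (f : N' →ₗ[T] N) (g : N →ₗ[T] N'') (hg : Function.Surjective g)
    (hex : Function.Exact f g) : IsAdicNilpotent r a N := by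
  intro n
  obtain ⟨m'', hm''⟩ := h'' n
  obtain ⟨m', hm'⟩ := h' n
  refine ⟨m' + m'', fun x => ?_⟩
  obtain ⟨y'', hy''⟩ := hm'' (g x)
  obtain ⟨y, rfl⟩ := hg y''
  have hker : g (a ^ m'' • x - r ^ n • y) = 0 := by
    rw [map_sub, map_smul, hy'', LinearMap.map_smul_of_tower, sub_self]
  obtain ⟨x', hx'⟩ := (hex _).mp hker
  obtain ⟨z', hz'⟩ := hm' x'
  refine ⟨a ^ m' • y + f z', ?_⟩
  calc a ^ (m' + m'') • x = a ^ m' • (r ^ n • y + f x') := by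
        rw [pow_add, mul_smul, hx', add_sub_cancel]
    _ = r ^ n • (a ^ m' • y) + f (r ^ n • z') := by
        rw [smul_add, smul_comm, ← map_smul, hz']
    _ = r ^ n • (a ^ m' • y + f z') := by
        rw [LinearMap.map_smul_of_tower, smul_add]

theorem IsAdicNilpotent.of_injective [IsNoetherianRing O] [Module.Finite O N]
    (h : IsAdicNilpotent r a N) (f : N' →ₗ[T] N) (hf : Function.Injective f) :
    IsAdicNilpotent r a N' := by
  set P : Submodule O N := LinearMap.range (f.restrictScalars O)
  obtain ⟨c, hc⟩ := exists_pow_smul_eq_zero_of_pow_smul_eq_zero (M := N ⧸ P) r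
  intro n
  obtain ⟨m, hm⟩ := h (n + c)
  refine ⟨m, fun x' => ?_⟩
  obtain ⟨y, hy⟩ := hm (f x')
  have hy_mem : r ^ (n + c) • y ∈ P := ⟨a ^ m • x', by simp [hy]⟩
  obtain ⟨y₀, hy₀⟩ : r ^ c • y ∈ P := by
    rw [← Submodule.Quotient.mk_eq_zero, Submodule.Quotient.mk_smul]
    refine hc _ (n + c) ?_
    rwa [← Submodule.Quotient.mk_smul, Submodule.Quotient.mk_eq_zero]
  refine ⟨y₀, hf ?_⟩
  rw [map_smul, hy, LinearMap.map_smul_of_tower, ← LinearMap.restrictScalars_apply (R := O), hy₀,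
    pow_add, mul_smul]

end AdicNilpotent

theorem typeOmega_iff {O T : Type*} [CommRing O] [CommRing T] [Algebra O T]
    {V : Type*} (Tv Tvv q : V → T) (lam : O)
    (N : Type*) [AddCommGroup N] [Module T N] [Module O N] [IsScalarTower O T N] :
    TypeOmega Tv Tvv q lam N ↔ ∀ v, IsAdicNilpotent lam (Tv v ^ 2 - Tvv v * (1 + q v) ^ 2) N :=
  Iff.rfl

theorem stmt14_general {O T : Type*} [CommRing O] [IsDomain O] [IsDiscreteValuationRing O]
    [CommRing T] [Algebra O T]
    {V : Type*} (Tv Tvv q : V → T) (lam : O)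
    {N' N N'' : Type*}
    [AddCommGroup N'] [Module T N'] [Module O N'] [IsScalarTower O T N']
    [AddCommGroup N] [Module T N] [Module O N] [IsScalarTower O T N]
    [AddCommGroup N''] [Module T N''] [Module O N''] [IsScalarTower O T N'']
    [Module.Finite O N]
    (f : N' →ₗ[T] N) (g : N →ₗ[T] N'')
    (hf : Function.Injective f) (hg : Function.Surjective g)
    (hex : Function.Exact ⇑f ⇑g) :
    (TypeOmega Tv Tvv q lam N →
        TypeOmega Tv Tvv q lam N' ∧ TypeOmega Tv Tvv q lam N'') ∧
    (TypeOmega Tv Tvv q lam N' → TypeOmega Tv Tvv q lam N'' →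
        TypeOmega Tv Tvv q lam N) := by
  simp only [typeOmega_iff]
  exact ⟨fun hN => ⟨fun v => (hN v).of_injective f hf, fun v => (hN v).of_surjective g hg⟩,
    fun hN' hN'' v => (hN' v).of_exact (hN'' v) f g hg hex⟩

/-- The full subcategory of type-ω modules (inside the category
of `T`-modules finitely generated over the complete DVR `O`) is a Serre
subcategory: for every short exact sequence `0 → N' → N → N'' → 0`, `N` is of
type ω if and only if both `N'` and `N''` are; in particular the type-ω modules
are closed under submodules, quotients, and extensions. -/
theorem stmt14 {O T : Type*} [CommRing O] [IsDomain O] [IsDiscreteValuationRing O]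
    [CommRing T] [Algebra O T]
    {V : Type*} (Tv Tvv q : V → T) (lam : O) (hlam : Irreducible lam)
    {N' N N'' : Type*}
    [AddCommGroup N'] [Module T N'] [Module O N'] [IsScalarTower O T N']
    [AddCommGroup N] [Module T N] [Module O N] [IsScalarTower O T N]
    [AddCommGroup N''] [Module T N''] [Module O N''] [IsScalarTower O T N'']
    [Module.Finite O N'] [Module.Finite O N] [Module.Finite O N'']
    (f : N' →ₗ[T] N) (g : N →ₗ[T] N'')
    (hf : Function.Injective f) (hg : Function.Surjective g)
    (hex : Function.Exact ⇑f ⇑g) :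
    (TypeOmega Tv Tvv q lam N →
        TypeOmega Tv Tvv q lam N' ∧ TypeOmega Tv Tvv q lam N'') ∧
    (TypeOmega Tv Tvv q lam N' → TypeOmega Tv Tvv q lam N'' →
        TypeOmega Tv Tvv q lam N) :=
  stmt14_general Tv Tvv q lam f g hf hg hex
end

section
/- Let ρ̄ : G → GL₂(k̄) be continuous with trace ρ̄(Fr_v)² = (1+q_v)² q_v^{-1} det ρ̄(Fr_v) for all v outside a finite set (in the sense of a dense set of Frobenius elements), where ℓ = char k ≥ 3. Then ρ̄ is reducible and ρ̄^ss ≅ χ̄ ⊕ χ̄(1) for some character χ̄ : G → k̄^×. -/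
/-!
By continuity the hypothesis holds on all of `G` (`HasEigenvalueRatio`), so `ρ h` has a double
eigenvalue for `h ∈ ker ω`. If some such `ρ h₀ = a + N` is parabolic (`N ≠ 0`, `N² = 0`), compare
it with its conjugate `ρ(g h₀ g⁻¹) = a + N'`: both `h₀ · g h₀ g⁻¹` and `h₀² · g h₀ g⁻¹` lie in
`ker ω`, which forces `tr(N N') = tr(N ρ g) tr(N ρ g⁻¹)` to vanish, so `ρ g` preserves the line
`im N`. Otherwise `ρ(ker ω)` is scalar, so any two `ρ g, ρ g'` commute up to a sign; anticommuting
ones would have trace `0`, hence `ω g = ω g' = -1`, and then `ρ(g g')` would have trace `0` and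
zero discriminant, so it would be singular. Commuting matrices share an eigenvector.

A common eigenvector gives a character `χ₁`, and `χ₂ = det ρ / χ₁` is the other eigenvalue.
Every `g` satisfies `χ₂ g = χ₁ g ω g` or `χ₁ g = χ₂ g ω g`, and a group is not the union of two
proper subgroups.
-/

open Matrix Polynomial
open scoped commutatorElement

namespace Matrix

variable {K : Type*} [Field K]

theorem mul_mul_eq_trace_smul_sub_det_smul_adjugate (N B : Matrix (Fin 2) (Fin 2) K) :
    N * B * N = (N * B).trace • N - N.det • B.adjugate := by
  ext i j
  fin_cases i <;> fin_cases j <;>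
    simp only [Fin.zero_eta, Fin.mk_one, Fin.isValue, mul_apply, Fin.sum_univ_two, trace_fin_two,
      det_fin_two, adjugate_fin_two, smul_of, smul_cons, smul_eq_mul, mul_neg, smul_empty,
      sub_apply, smul_apply, of_apply, cons_val', cons_val_zero, cons_val_one, cons_val_fin_one,
      sub_neg_eq_add] <;>
    ring

theorem trace_eq_zero_of_sq_eq_zero {n : Type*} [Fintype n] [DecidableEq n]
    {N : Matrix n n K} (hN : N ^ 2 = 0) : N.trace = 0 :=
  (isNilpotent_trace_of_isNilpotent ⟨2, hN⟩).eq_zero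

theorem det_eq_zero_of_sq_eq_zero {n : Type*} [Fintype n] [DecidableEq n] [Nonempty n]
    {N : Matrix n n K} (hN : N ^ 2 = 0) : N.det = 0 :=
  pow_eq_zero_iff two_ne_zero |>.mp (by rw [← det_pow, hN, det_zero])

theorem det_scalar_add_of_sq_eq_zero (a : K) {N : Matrix (Fin 2) (Fin 2) K} (hN : N ^ 2 = 0) :
    (scalar (Fin 2) a + N).det = a ^ 2 := by
  have htr := trace_eq_zero_of_sq_eq_zero hN
  have hdet := det_eq_zero_of_sq_eq_zero hN
  rw [trace_fin_two] at htr
  rw [det_fin_two] at hdet ⊢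
  simp only [scalar_apply, add_apply, diagonal_apply_eq, ne_eq, zero_ne_one, not_false_eq_true,
    diagonal_apply_ne, one_ne_zero, zero_add]
  linear_combination a * htr + hdet

theorem exists_eq_smul_of_mulVec_eq_zero {N : Matrix (Fin 2) (Fin 2) K} (hN : N ≠ 0)
    {x y : Fin 2 → K} (hx : x ≠ 0) (hNx : N *ᵥ x = 0) (hNy : N *ᵥ y = 0) :
    ∃ c : K, y = c • x := by
  have hker : LinearMap.ker N.toLin' ≠ ⊤ := fun h =>
    hN (toLin'.injective (LinearMap.ker_eq_top.mp h ▸ (map_zero _).symm))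
  have heq : K ∙ x = LinearMap.ker N.toLin' := by
    refine Submodule.eq_of_le_of_finrank_le
      ((Submodule.span_singleton_le_iff_mem _ _).mpr hNx) ?_
    have := Submodule.finrank_lt hker
    rw [finrank_span_singleton hx]
    simp only [Module.finrank_fin_fun] at this
    omega
  obtain ⟨c, hc⟩ := Submodule.mem_span_singleton.mp (heq.symm ▸ hNy : y ∈ K ∙ x)
  exact ⟨c, hc.symm⟩

theorem exists_mulVec_eq_smul_of_trace_mul_eq_zero {N : Matrix (Fin 2) (Fin 2) K}
    (hN : N ^ 2 = 0) {y : Fin 2 → K} (hy : N *ᵥ y ≠ 0) {B : Matrix (Fin 2) (Fin 2) K}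
    (htr : (N * B).trace = 0) : ∃ c : K, B *ᵥ (N *ᵥ y) = c • (N *ᵥ y) := by
  have hNBN : N * B * N = 0 := by
    rw [mul_mul_eq_trace_smul_sub_det_smul_adjugate, htr, det_eq_zero_of_sq_eq_zero hN,
      zero_smul, zero_smul, sub_zero]
  refine exists_eq_smul_of_mulVec_eq_zero (fun h : N = 0 => hy (by rw [h, zero_mulVec])) hy ?_ ?_
  · rw [mulVec_mulVec, ← sq, hN, zero_mulVec]
  · rw [mulVec_mulVec, mulVec_mulVec, hNBN, zero_mulVec]

theorem exists_mulVec_eq_smul_of_inv {n : Type*} [Fintype n] [DecidableEq n]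
    (P : (Matrix n n K)ˣ) {x : n → K} (hx : x ≠ 0) (h : ∃ c : K, ↑P⁻¹ *ᵥ x = c • x) :
    ∃ c : K, ↑P *ᵥ x = c • x := by
  obtain ⟨c, hc⟩ := h
  have hx' : c • (↑P *ᵥ x) = x := by
    rw [← mulVec_smul, ← hc, mulVec_mulVec, P.mul_inv, one_mulVec]
  have hc0 : c ≠ 0 := by
    rintro rfl
    exact hx (by rw [← hx', zero_smul])
  exact ⟨c⁻¹, (eq_inv_smul_iff₀ hc0).mpr hx'⟩

theorem trace_eq_zero_of_mul_eq_neg_mul {n : Type*} [Fintype n] [DecidableEq n]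
    [NeZero (2 : K)] {M : Matrix n n K} (P : (Matrix n n K)ˣ) (h : M * P = -(P * M)) :
    M.trace = 0 := by
  have : M.trace = -M.trace := by
    conv_lhs => rw [← trace_units_conj P M]
    rw [show (P : Matrix n n K) * M = -(M * P) by rw [h, neg_neg], neg_mul, trace_neg, mul_assoc,
      P.mul_inv, mul_one]
  exact (mul_eq_zero.mp (by linear_combination this : (2 : K) * M.trace = 0)).resolve_left
    two_ne_zero

theorem trace_mul_eq_zero_of_discr_eq_zero [NeZero (2 : K)] {a : K} (ha : a ≠ 0)
    {N N' : Matrix (Fin 2) (Fin 2) K} (hN : N ^ 2 = 0) (hN' : N' ^ 2 = 0)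
    (h₁ : ((scalar (Fin 2) a + N) * (scalar (Fin 2) a + N')).discr = 0)
    (h₂ : ((scalar (Fin 2) a + N) ^ 2 * (scalar (Fin 2) a + N')).discr = 0) :
    (N * N').trace = 0 := by
  simp only [discr_fin_two, det_mul, det_pow, det_scalar_add_of_sq_eq_zero a hN,
    det_scalar_add_of_sq_eq_zero a hN'] at h₁ h₂
  have htr := trace_eq_zero_of_sq_eq_zero hN
  have htr' := trace_eq_zero_of_sq_eq_zero hN'
  have hs : scalar (Fin 2) a = a • 1 := (smul_one_eq_diagonal a).symm
  have e₁ : ((scalar (Fin 2) a + N) * (scalar (Fin 2) a + N')).trace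
      = 2 * a ^ 2 + (N * N').trace := by
    simp only [hs, mul_add, add_mul, mul_smul_comm, smul_mul_assoc, mul_one, one_mul, smul_add,
      trace_add, trace_smul, trace_one, Fintype.card_fin, Nat.cast_ofNat, smul_eq_mul, htr, htr']
    ring
  have hsq : (scalar (Fin 2) a + N) ^ 2 = a ^ 2 • 1 + (2 * a) • N := by
    rw [sq, hs, add_mul, mul_add, mul_add, ← sq N, hN, smul_mul_smul, smul_mul_assoc,
      mul_smul_comm, one_mul, mul_one, one_mul]
    module
  have e₂ : ((scalar (Fin 2) a + N) ^ 2 * (scalar (Fin 2) a + N')).trace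
      = 2 * a ^ 3 + 2 * a * (N * N').trace := by
    rw [hsq, hs]
    simp only [mul_add, add_mul, mul_smul_comm, smul_mul_assoc, mul_one, one_mul, smul_add,
      trace_add, trace_smul, trace_one, Fintype.card_fin, Nat.cast_ofNat, smul_eq_mul, htr, htr']
    ring
  rw [e₁] at h₁
  rw [e₂] at h₂
  have : 2 ^ 3 * a ^ 4 * (N * N').trace = 0 := by linear_combination 4 * a ^ 2 * h₁ - h₂
  exact (mul_eq_zero.mp this).resolve_left
    (mul_ne_zero (pow_ne_zero _ two_ne_zero) (pow_ne_zero _ ha))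

theorem exists_common_eigenvector_of_commute [IsAlgClosed K] {ι : Type*}
    (A : ι → Matrix (Fin 2) (Fin 2) K) (hA : ∀ i j, Commute (A i) (A j)) :
    ∃ x : Fin 2 → K, x ≠ 0 ∧ ∀ i, ∃ c : K, A i *ᵥ x = c • x := by
  by_cases hsc : ∀ i, ∃ c : K, A i = c • 1
  · refine ⟨Pi.single 0 1, by simp, fun i => ?_⟩
    obtain ⟨c, hc⟩ := hsc i
    exact ⟨c, by rw [hc, smul_mulVec, one_mulVec]⟩
  obtain ⟨i₀, hi₀⟩ := not_forall.mp hsc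
  obtain ⟨μ, hμ⟩ := Module.End.exists_eigenvalue (toLin' (A i₀))
  obtain ⟨x, hx⟩ := hμ.exists_hasEigenvector
  have hNx : (A i₀ - μ • 1) *ᵥ x = 0 := by
    rw [sub_mulVec, smul_mulVec, one_mulVec, ← toLin'_apply,
      Module.End.mem_eigenspace_iff.mp hx.1, sub_self]
  have hN : A i₀ - μ • 1 ≠ 0 := sub_ne_zero.mpr fun h => hi₀ ⟨μ, h⟩
  refine ⟨x, hx.2, fun i => exists_eq_smul_of_mulVec_eq_zero hN hx.2 hNx ?_⟩
  rw [mulVec_mulVec, ((hA i₀ i).sub_left ((Commute.one_left (A i)).smul_left μ)).eq,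
    ← mulVec_mulVec, hNx, mulVec_zero]

theorem trace_eq_add_of_mulVec_eq_smul {M : Matrix (Fin 2) (Fin 2) K} {x : Fin 2 → K}
    (hx : x ≠ 0) {a b : K} (ha : a ≠ 0) (hax : M *ᵥ x = a • x) (hab : a * b = M.det) :
    M.trace = a + b := by
  have hroot : (scalar (Fin 2) a - M).det = 0 := exists_mulVec_eq_zero_iff.mp
    ⟨x, hx, by rw [sub_mulVec, hax, scalar_apply, ← smul_one_eq_diagonal, smul_mulVec,
      one_mulVec, sub_self]⟩
  rw [← eval_charpoly, charpoly_fin_two] at hroot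
  simp only [eval_add, eval_sub, eval_pow, eval_X, eval_mul, eval_C] at hroot
  exact mul_left_cancel₀ ha (by linear_combination -hroot - hab)

theorem charpoly_eq_mul_of_trace_of_det {M : Matrix (Fin 2) (Fin 2) K} {a b : K}
    (htr : M.trace = a + b) (hdet : M.det = a * b) :
    M.charpoly = (X - C a) * (X - C b) := by
  rw [charpoly_fin_two, htr, hdet, C_add, C_mul]
  ring

end Matrix

theorem MonoidHom.eq_or_eq_of_forall_eq_or_eq {G M : Type*} [MulOneClass G] [Group M]
    {φ₁ ψ₁ φ₂ ψ₂ : G →* M} (h : ∀ g, φ₁ g = ψ₁ g ∨ φ₂ g = ψ₂ g) : φ₁ = ψ₁ ∨ φ₂ = ψ₂ := by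
  by_contra! hne
  obtain ⟨a, ha⟩ := DFunLike.ne_iff.mp hne.1
  obtain ⟨b, hb⟩ := DFunLike.ne_iff.mp hne.2
  have ha₂ := (h a).resolve_left ha
  have hb₁ := (h b).resolve_right hb
  rcases h (a * b) with hab | hab
  · rw [map_mul, map_mul, hb₁] at hab
    exact ha (mul_right_cancel hab)
  · rw [map_mul, map_mul, ha₂] at hab
    exact hb (mul_left_cancel hab)

theorem exists_monoidHom_mulVec_eq_smul {K G n : Type*} [Field K] [Group G] [Fintype n]
    [DecidableEq n] {ρ : G →* GL n K} {x : n → K} (hx : x ≠ 0)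
    (h : ∀ g, ∃ c : K, (ρ g).val *ᵥ x = c • x) :
    ∃ χ : G →* Kˣ, ∀ g, (ρ g).val *ᵥ x = (χ g : K) • x := by
  choose χ hχ using h
  have hinj : ∀ {c c' : K}, c • x = c' • x → c = c' := fun h => smul_left_injective K hx h
  let χ' : G →* K :=
    { toFun := χ
      map_one' := hinj (by rw [← hχ, map_one, Units.val_one, one_mulVec, one_smul])
      map_mul' := fun g g' => hinj (by
        rw [← hχ, map_mul, Units.val_mul, ← mulVec_mulVec, hχ, mulVec_smul, hχ, smul_smul,
          mul_comm]) }
  exact ⟨χ'.toHomUnits, hχ⟩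

section HasEigenvalueRatio

variable {K G : Type*} [Field K] [Group G]

/-- The eigenvalues `α, β` of each `ρ g` satisfy `(ω g α - β)(α - ω g β) = 0`. -/
def HasEigenvalueRatio (ρ : G →* GL (Fin 2) K) (ω : G →* Kˣ) : Prop :=
  ∀ g, (ρ g).val.trace ^ 2 * ω g = (1 + ω g) ^ 2 * (ρ g).val.det

namespace HasEigenvalueRatio

variable {ρ : G →* GL (Fin 2) K} {ω : G →* Kˣ}

theorem discr_eq_zero_of_eq_one (hρ : HasEigenvalueRatio ρ ω)
    {h : G} (hh : ω h = 1) : (ρ h).val.discr = 0 := by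
  have := hρ h
  rw [hh, Units.val_one] at this
  rw [discr_fin_two]
  linear_combination this

theorem eq_neg_one_of_trace_eq_zero (hρ : HasEigenvalueRatio ρ ω)
    {g : G} (htr : (ρ g).val.trace = 0) : (ω g : K) = -1 := by
  have h := hρ g
  rw [htr, zero_pow two_ne_zero, zero_mul, eq_comm, mul_eq_zero] at h
  linear_combination pow_eq_zero_iff two_ne_zero |>.mp (h.resolve_right (ρ g).det_ne_zero)

theorem mul_ne_neg_mul [NeZero (2 : K)]
    (hρ : HasEigenvalueRatio ρ ω) (g g' : G) :
    (ρ g).val * (ρ g').val ≠ -((ρ g').val * (ρ g).val) := by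
  intro h
  have htr := trace_eq_zero_of_mul_eq_neg_mul (ρ g') h
  have htr' := trace_eq_zero_of_mul_eq_neg_mul (ρ g) (by rw [h, neg_neg])
  have htr'' : (ρ (g * g')).val.trace = 0 := trace_eq_zero_of_mul_eq_neg_mul (ρ g) (by
    rw [map_mul, Units.val_mul, mul_assoc, ← neg_eq_iff_eq_neg.mpr h, mul_neg])
  have hω : ω (g * g') = 1 := Units.ext (by
    rw [map_mul, Units.val_mul, hρ.eq_neg_one_of_trace_eq_zero htr,
      hρ.eq_neg_one_of_trace_eq_zero htr', Units.val_one, neg_one_mul, neg_neg])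
  have hdiscr := hρ.discr_eq_zero_of_eq_one hω
  rw [discr_fin_two, htr''] at hdiscr
  exact (ρ (g * g')).det_ne_zero <| (mul_eq_zero.mp (by linear_combination -hdiscr :
    (2 : K) ^ 2 * (ρ (g * g')).val.det = 0)).resolve_left (pow_ne_zero _ two_ne_zero)

theorem commute_of_forall_not_isParabolic [NeZero (2 : K)] (hρ : HasEigenvalueRatio ρ ω)
    (hnp : ∀ h, ω h = 1 → ¬ (ρ h).IsParabolic) (g g' : G) :
    Commute (ρ g).val (ρ g').val := by
  have hk : ω ⁅g, g'⁆ = 1 := by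
    rw [map_commutatorElement, commutatorElement_eq_one_iff_mul_comm, mul_comm]
  obtain ⟨c, hc⟩ : (ρ ⁅g, g'⁆).val ∈ Set.range (scalar (Fin 2)) := by
    by_contra hns
    exact hnp _ hk ⟨hns, hρ.discr_eq_zero_of_eq_one hk⟩
  have hrel : (ρ g).val * (ρ g').val = c • ((ρ g').val * (ρ g).val) := by
    rw [← Units.val_mul, ← map_mul, show g * g' = ⁅g, g'⁆ * (g' * g) by group, map_mul,
      Units.val_mul, ← hc, scalar_apply, ← smul_one_eq_diagonal, smul_mul_assoc, one_mul,
      map_mul, Units.val_mul]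
  have hc2 : c ^ 2 = 1 := by
    have hdet := congrArg det hrel
    rw [det_smul, Fintype.card_fin, det_mul, det_mul, mul_comm (det _)] at hdet
    exact (mul_eq_zero.mp (by linear_combination -hdet : (c ^ 2 - 1) * _ = 0)).resolve_right
      (mul_ne_zero (ρ g').det_ne_zero (ρ g).det_ne_zero) |> sub_eq_zero.mp
  rcases sq_eq_one_iff.mp hc2 with rfl | rfl
  · rwa [one_smul] at hrel
  · rw [neg_smul, one_smul] at hrel
    exact absurd hrel (hρ.mul_ne_neg_mul g g')

theorem trace_mul_eq_zero_or_trace_mul_inv_eq_zero [NeZero (2 : K)] (hρ : HasEigenvalueRatio ρ ω)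
    {h₀ : G} (hω₀ : ω h₀ = 1) {a : K} {N : Matrix (Fin 2) (Fin 2) K}
    (hA₀ : (ρ h₀).val = scalar (Fin 2) a + N) (hN : N ^ 2 = 0) (g : G) :
    (N * (ρ g).val).trace = 0 ∨ (N * (ρ g)⁻¹.val).trace = 0 := by
  set B := ρ g
  set N' := B.val * N * B⁻¹.val with hN'
  have hA₁ : (ρ (g * h₀ * g⁻¹)).val = scalar (Fin 2) a + N' := by
    rw [map_mul, map_mul, map_inv, Units.val_mul, Units.val_mul, hA₀, mul_add, add_mul,
      ← (scalar_commute a (fun _ => Commute.all _ _) _).eq, mul_assoc, Units.mul_inv, mul_one]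
  have hN'sq : N' ^ 2 = 0 := by
    rw [sq, show N' * N' = B * (N ^ 2 * B⁻¹.val) by simp only [hN', sq, mul_assoc,
      Units.inv_mul_cancel_left], hN, zero_mul, mul_zero]
  have ha : a ≠ 0 := by
    rintro rfl
    have := (ρ h₀).det_ne_zero
    rw [hA₀, det_scalar_add_of_sq_eq_zero 0 hN] at this
    exact this (zero_pow two_ne_zero)
  have hs : (N * N').trace = 0 := by
    refine trace_mul_eq_zero_of_discr_eq_zero ha hN hN'sq ?_ ?_
    · rw [← hA₀, ← hA₁, ← Units.val_mul, ← map_mul]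
      exact hρ.discr_eq_zero_of_eq_one (by simp [hω₀])
    · rw [← hA₀, ← hA₁, ← Units.val_pow_eq_pow_val, ← Units.val_mul, ← map_pow, ← map_mul]
      exact hρ.discr_eq_zero_of_eq_one (by simp [hω₀])
  have hfac : (N * N').trace = (N * B).trace * (N * B⁻¹.val).trace := by
    rw [hN', ← mul_assoc, ← mul_assoc, mul_mul_eq_trace_smul_sub_det_smul_adjugate,
      det_eq_zero_of_sq_eq_zero hN, zero_smul, sub_zero, smul_mul_assoc, trace_smul,
      smul_eq_mul]
  exact mul_eq_zero.mp (hfac ▸ hs)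

theorem exists_common_eigenvector_of_isParabolic [NeZero (2 : K)] (hρ : HasEigenvalueRatio ρ ω)
    {h₀ : G} (hω₀ : ω h₀ = 1) (hpar : (ρ h₀).IsParabolic) :
    ∃ x : Fin 2 → K, x ≠ 0 ∧ ∀ g, ∃ c : K, (ρ g).val *ᵥ x = c • x := by
  obtain ⟨a, N, hA₀, hN0, hN⟩ := isParabolic_iff_exists.mp hpar
  obtain ⟨y, hy⟩ : ∃ y, N *ᵥ y ≠ 0 := by
    by_contra! h
    exact hN0 (toLin'.injective (LinearMap.ext fun y => by simpa using h y))
  refine ⟨N *ᵥ y, hy, fun g => ?_⟩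
  rcases hρ.trace_mul_eq_zero_or_trace_mul_inv_eq_zero hω₀ hA₀ hN g with h | h
  · exact exists_mulVec_eq_smul_of_trace_mul_eq_zero hN hy h
  · exact exists_mulVec_eq_smul_of_inv (ρ g) hy
      (exists_mulVec_eq_smul_of_trace_mul_eq_zero hN hy h)

theorem exists_common_eigenvector [IsAlgClosed K] [NeZero (2 : K)]
    (hρ : HasEigenvalueRatio ρ ω) :
    ∃ x : Fin 2 → K, x ≠ 0 ∧ ∀ g, ∃ c : K, (ρ g).val *ᵥ x = c • x := by
  by_cases hpar : ∃ h, ω h = 1 ∧ (ρ h).IsParabolic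
  · obtain ⟨h₀, hω₀, hpar₀⟩ := hpar
    exact hρ.exists_common_eigenvector_of_isParabolic hω₀ hpar₀
  · exact exists_common_eigenvector_of_commute _
      (hρ.commute_of_forall_not_isParabolic fun h hh hp => hpar ⟨h, hh, hp⟩)

theorem exists_charpoly_eq (hρ : HasEigenvalueRatio ρ ω)
    {x : Fin 2 → K} (hx : x ≠ 0) (hxg : ∀ g, ∃ c : K, (ρ g).val *ᵥ x = c • x) :
    ∃ χ : G →* Kˣ, ∀ g, (ρ g).val.charpoly = (X - C (χ g : K)) * (X - C ((χ g : K) * ω g)) := by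
  obtain ⟨χ₁, hχ₁⟩ := exists_monoidHom_mulVec_eq_smul hx hxg
  set χ₂ : G →* Kˣ := (GeneralLinearGroup.det.comp ρ) / χ₁
  have hdet : ∀ g, (ρ g).val.det = χ₁ g * χ₂ g := fun g => by
    simp [χ₂, mul_div_cancel₀ _ (χ₁ g).ne_zero]
  have htr : ∀ g, (ρ g).val.trace = χ₁ g + χ₂ g := fun g =>
    trace_eq_add_of_mulVec_eq_smul hx (χ₁ g).ne_zero (hχ₁ g) (hdet g).symm
  have hor : ∀ g, χ₂ g = (χ₁ * ω) g ∨ χ₁ g = (χ₂ * ω) g := by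
    intro g
    have h := hρ g
    rw [htr, hdet] at h
    have : ((χ₂ g : K) - χ₁ g * ω g) * (χ₁ g - χ₂ g * ω g) = 0 := by linear_combination -h
    rcases mul_eq_zero.mp this with h | h
    · exact Or.inl (Units.ext (by simpa [sub_eq_zero] using h))
    · exact Or.inr (Units.ext (by simpa [sub_eq_zero] using h))
  rcases MonoidHom.eq_or_eq_of_forall_eq_or_eq hor with h | h
  · refine ⟨χ₁, fun g => charpoly_eq_mul_of_trace_of_det (htr g) (hdet g) |>.trans ?_⟩
    rw [h, MonoidHom.mul_apply, Units.val_mul]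
  · refine ⟨χ₂, fun g => charpoly_eq_mul_of_trace_of_det (htr g) (hdet g) |>.trans ?_⟩
    rw [h, MonoidHom.mul_apply, Units.val_mul, mul_comm]

end HasEigenvalueRatio

end HasEigenvalueRatio

theorem stmt15_general {K : Type*} [Field K] [IsAlgClosed K]
    (ℓ : ℕ) (h3 : 3 ≤ ℓ) [CharP K ℓ] [TopologicalSpace K] [T2Space K]
    {G : Type*} [Group G] [TopologicalSpace G]
    {V : Type*} (Fr : V → G) (q : V → Kˣ)
    (ρbar : G →* GL (Fin 2) K) (ω : G →* Kˣ)
    (hω : ∀ v : V, ω (Fr v) = q v)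
    (hdense : Dense (Set.range Fr))
    (hcont : Continuous fun g : G =>
      ((ρbar g).val.trace) ^ 2 -
        (1 + (ω g : K)) ^ 2 * ((ω g : K))⁻¹ * (ρbar g).val.det)
    (htr : ∀ v : V, ((ρbar (Fr v)).val.trace) ^ 2 =
      (1 + (q v : K)) ^ 2 * ((q v : K))⁻¹ * (ρbar (Fr v)).val.det) :
    (∃ x : Fin 2 → K, x ≠ 0 ∧ ∀ g : G, ∃ c : K, (ρbar g).val.mulVec x = c • x) ∧
    ∃ χ : G →* Kˣ, ∀ g : G,
      ((ρbar g).val).charpoly =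
        (X - C ((χ g : K))) * (X - C ((χ g : K) * (ω g : K))) := by
  have : NeZero (2 : K) := ⟨Ring.two_ne_zero (by rw [ringChar.eq K ℓ]; omega)⟩
  have hρ : HasEigenvalueRatio ρbar ω := by
    have hzero := hcont.ext_on hdense (continuous_const (y := (0 : K))) (by
      rintro _ ⟨v, rfl⟩
      simp [hω, htr])
    intro g
    have hg := sub_eq_zero.mp (congrFun hzero g)
    rw [hg]
    field_simp
  obtain ⟨x, hx, hxg⟩ := hρ.exists_common_eigenvector
  exact ⟨⟨x, hx, hxg⟩, hρ.exists_charpoly_eq hx hxg⟩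

/-- Let `ρ̄ : G → GL₂(k̄)` be continuous, with
`trace ρ̄(Fr_v)² = (1+q_v)² q_v⁻¹ det ρ̄(Fr_v)` for a dense set of Frobenius
elements, where `char k̄ = ℓ ≥ 3` and `ω` is the mod-`ℓ` cyclotomic character
(`ω (Fr_v) = q_v`).  Then `ρ̄` is reducible (has a common eigenvector) and
`ρ̄^ss ≅ χ̄ ⊕ χ̄(1)` for some character `χ̄` (expressed via characteristic
polynomials, by Brauer–Nesbitt). -/
theorem stmt15 {K : Type*} [Field K] [IsAlgClosed K]
    (ℓ : ℕ) (hℓ : ℓ.Prime) (h3 : 3 ≤ ℓ) [CharP K ℓ] [TopologicalSpace K] [T2Space K]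
    {G : Type*} [Group G] [TopologicalSpace G] [IsTopologicalGroup G] [CompactSpace G]
    {V : Type*} (Fr : V → G) (q : V → Kˣ)
    (ρbar : G →* GL (Fin 2) K) (ω : G →* Kˣ)
    (hω : ∀ v : V, ω (Fr v) = q v)
    (hdense : Dense (Set.range Fr))
    (hcont : Continuous fun g : G =>
      ((ρbar g).val.trace) ^ 2 -
        (1 + (ω g : K)) ^ 2 * ((ω g : K))⁻¹ * (ρbar g).val.det)
    (htr : ∀ v : V, ((ρbar (Fr v)).val.trace) ^ 2 =
      (1 + (q v : K)) ^ 2 * ((q v : K))⁻¹ * (ρbar (Fr v)).val.det) :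
    (∃ x : Fin 2 → K, x ≠ 0 ∧ ∀ g : G, ∃ c : K, (ρbar g).val.mulVec x = c • x) ∧
    ∃ χ : G →* Kˣ, ∀ g : G,
      ((ρbar g).val).charpoly =
        (X - C ((χ g : K))) * (X - C ((χ g : K) * (ω g : K))) :=
  stmt15_general ℓ h3 Fr q ρbar ω hω hdense hcont htr
end
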